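/- Let L be a nondegenerate lattice and G a finite group acting on L by isometries. Suppose u ∈ L^G is primitive in L^G, v ∈ L_G, and p is a prime such that u + v ∈ p·L. Then p divides |G|. (This is the key divisibility claim proved inside Lemma 8.1: the orbit sum of w = (u+v)/p equals (|G|/p)·u, since the orbit sum of v lies in L^G ∩ L_G = {0}, and primitivity of u forces |G|/p ∈ ℤ.) -/

import Mathlib

/-- The Gram matrix of a bilinear form `B` with respect to a family of vectors `v`. -/
def gramMatrix {L : Type*} [AddCommGroup L] [Module ℤ L]
    (B : L →ₗ[ℤ] L →ₗ[ℤ] ℤ) {ι : Type*} (v : ι → L) : Matrix ι ι ℤ :=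
  Matrix.of fun i j => B (v i) (v j)

/-- The invariant sublattice `L^G = {x ∈ L : g • x = x for all g ∈ G}` of a `G`-action
on `L` given by `ρ`. -/
def invariantLattice {L : Type*} [AddCommGroup L] [Module ℤ L]
    {G : Type*} [Group G] (ρ : G →* (L ≃ₗ[ℤ] L)) : Submodule ℤ L where
  carrier := {x | ∀ g : G, ρ g x = x}
  add_mem' := by
    intro a b ha hb g
    rw [map_add, ha g, hb g]
  zero_mem' := by
    intro g
    simp
  smul_mem' := by
    intro c x hx g
    rw [(ρ g).map_smul c x, hx g]

/-- The coinvariant sublattice `L_G = {x ∈ L : B x y = 0 for all y ∈ L^G}`. -/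
def coinvariantLattice {L : Type*} [AddCommGroup L] [Module ℤ L]
    {G : Type*} [Group G] (B : L →ₗ[ℤ] L →ₗ[ℤ] ℤ) (ρ : G →* (L ≃ₗ[ℤ] L)) :
    Submodule ℤ L where
  carrier := {x | ∀ y ∈ invariantLattice ρ, B x y = 0}
  add_mem' := by
    intro a b ha hb y hy
    rw [map_add, LinearMap.add_apply, ha y hy, hb y hy, add_zero]
  zero_mem' := by
    intro y hy
    rw [map_zero, LinearMap.zero_apply]
  smul_mem' := by
    intro c x hx y hy
    rw [B.map_smul c x, LinearMap.smul_apply, hx y hy, smul_zero]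

/-!
The orbit sum `Σ_g g·x` is linear and lands in `L^G`; on `L^G` it is multiplication by `|G|`,
and it preserves `L_G`. For `x ∈ L^G ∩ L_G` and any `y`,
`|G| · B x y = B x (Σ_g g·y) = 0`, so nondegeneracy gives `L^G ∩ L_G = 0`. Writing
`u + v = p • w`, the orbit sum of `v` therefore vanishes and `p • Σ_g g·w = |G| • u`.
If `p ∤ |G|`, Bézout writes `u` as `p` times an element of `L^G`, contradicting primitivity.
-/

theorem gramMatrix_eq_toMatrix₂ {L : Type*} [AddCommGroup L]
    (B : L →ₗ[ℤ] L →ₗ[ℤ] ℤ) {ι : Type*} [Fintype ι] [DecidableEq ι]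
    (bL : Module.Basis ι ℤ L) :
    gramMatrix B (fun i => bL i) = LinearMap.toMatrix₂ bL bL B := by
  ext i j
  rw [LinearMap.toMatrix₂_apply]
  rfl

theorem eq_one_of_smul_eq_smul_of_isCoprime {L : Type*} [AddCommGroup L]
    {N : Submodule ℤ L} {u s : L} (hu : u ∈ N) (hs : s ∈ N)
    (hprim : ∀ m : ℤ, 0 < m → ∀ u' ∈ N, u = m • u' → m = 1)
    {m n : ℤ} (hm : 0 < m) (hmn : IsCoprime m n) (h : m • s = n • u) : m = 1 := by
  obtain ⟨a, b, hab⟩ := hmn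
  refine hprim m hm (a • u + b • s) (N.add_mem (N.smul_mem a hu) (N.smul_mem b hs)) ?_
  calc u = (a * m + b * n) • u := by rw [hab, one_smul]
    _ = m • (a • u + b • s) := by
      rw [add_smul, mul_smul, mul_smul, ← h, smul_add, smul_comm m a, smul_comm m b]

section OrbitSum

variable {L : Type*} [AddCommGroup L] {G : Type*} [Group G] [Fintype G]
  (ρ : G →* (L ≃ₗ[ℤ] L))

def orbitSum : L →ₗ[ℤ] L := ∑ g : G, (ρ g).toLinearMap

theorem orbitSum_apply (x : L) : orbitSum ρ x = ∑ g : G, ρ g x := by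
  rw [orbitSum, LinearMap.sum_apply]; rfl

theorem orbitSum_mem_invariantLattice (x : L) : orbitSum ρ x ∈ invariantLattice ρ := by
  intro g
  rw [orbitSum_apply, map_sum]
  exact Fintype.sum_equiv (Equiv.mulLeft g) _ _ fun h => by simp [map_mul]

theorem orbitSum_eq_card_smul {x : L} (hx : x ∈ invariantLattice ρ) :
    orbitSum ρ x = (Fintype.card G : ℤ) • x := by
  rw [orbitSum_apply, Finset.sum_congr rfl fun g _ => hx g, Finset.sum_const,
    Finset.card_univ, natCast_zsmul]

variable {B : L →ₗ[ℤ] L →ₗ[ℤ] ℤ}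

theorem apply_orbitSum_right_of_mem_invariantLattice
    (hisom : ∀ (g : G) (x y : L), B (ρ g x) (ρ g y) = B x y) {x : L} (hx : x ∈ invariantLattice ρ)
    (y : L) : B x (orbitSum ρ y) = Fintype.card G * B x y := by
  have hinv (g : G) : B x (ρ g y) = B x y := by rw [← hisom g x y, hx g]
  rw [orbitSum_apply, map_sum, Finset.sum_congr rfl fun g _ => hinv g, Finset.sum_const,
    Finset.card_univ, nsmul_eq_mul]

theorem orbitSum_mem_coinvariantLattice (hisom : ∀ (g : G) (x y : L), B (ρ g x) (ρ g y) = B x y)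
    {v : L} (hv : v ∈ coinvariantLattice B ρ) :
    orbitSum ρ v ∈ coinvariantLattice B ρ := by
  intro y hy
  rw [orbitSum_apply, map_sum, LinearMap.sum_apply]
  refine Finset.sum_eq_zero fun g _ => ?_
  rw [← hy g, hisom, hv y hy]

theorem eq_zero_of_mem_invariantLattice_of_mem_coinvariantLattice
    (hisom : ∀ (g : G) (x y : L), B (ρ g x) (ρ g y) = B x y) (hB : B.SeparatingLeft)
    {x : L} (hxi : x ∈ invariantLattice ρ) (hxc : x ∈ coinvariantLattice B ρ) : x = 0 := by
  refine hB x fun y => ?_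
  have hzero : (Fintype.card G : ℤ) * B x y = 0 := by
    rw [← apply_orbitSum_right_of_mem_invariantLattice ρ hisom hxi]
    exact hxc _ (orbitSum_mem_invariantLattice ρ y)
  exact (mul_eq_zero.mp hzero).resolve_left (by exact_mod_cast Fintype.card_ne_zero)

theorem smul_orbitSum_eq_card_smul (hisom : ∀ (g : G) (x y : L), B (ρ g x) (ρ g y) = B x y)
    (hB : B.SeparatingLeft) {u v w : L}
    (hu : u ∈ invariantLattice ρ) (hv : v ∈ coinvariantLattice B ρ) {m : ℤ}
    (hw : u + v = m • w) : m • orbitSum ρ w = (Fintype.card G : ℤ) • u := by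
  have hv0 : orbitSum ρ v = 0 :=
    eq_zero_of_mem_invariantLattice_of_mem_coinvariantLattice ρ hisom hB
      (orbitSum_mem_invariantLattice ρ v) (orbitSum_mem_coinvariantLattice ρ hisom hv)
  rw [← map_smul, ← hw, map_add, hv0, add_zero, orbitSum_eq_card_smul ρ hu]

end OrbitSum

theorem prime_dvd_card_of_sum_in_p_mul_lattice_general
    {L : Type*} [AddCommGroup L] [Module ℤ L]
    {G : Type*} [Group G] [Finite G]
    (B : L →ₗ[ℤ] L →ₗ[ℤ] ℤ)
    (ρ : G →* (L ≃ₗ[ℤ] L)) (hisom : ∀ (g : G) (x y : L), B (ρ g x) (ρ g y) = B x y)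
    {ι : Type*} [Fintype ι] [DecidableEq ι] (bL : Module.Basis ι ℤ L)
    (hdet : (gramMatrix B (fun i => bL i)).det ≠ 0)
    (p : ℕ) (hp : p.Prime)
    (u : L) (hu : u ∈ invariantLattice ρ)
    (hprim : ∀ m : ℤ, 0 < m → ∀ u' ∈ invariantLattice ρ, u = m • u' → m = 1)
    (v : L) (hv : v ∈ coinvariantLattice B ρ)
    (hw : ∃ w : L, u + v = (p : ℤ) • w) :
    p ∣ Nat.card G := by
  -- the scalar actions in `hprim` and `hw` are `zsmul`, so use the canonical `ℤ`-module structure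
  obtain rfl : ‹Module ℤ L› = AddCommGroup.toIntModule L := Subsingleton.elim _ _
  have := Fintype.ofFinite G
  obtain ⟨w, hw⟩ := hw
  have hB : B.SeparatingLeft :=
    LinearMap.separatingLeft_of_det_ne_zero bL (by rwa [← gramMatrix_eq_toMatrix₂])
  have hkey := smul_orbitSum_eq_card_smul ρ hisom hB hu hv hw
  by_contra hndvd
  have hcop : IsCoprime (p : ℤ) (Fintype.card G) := by
    rw [Nat.isCoprime_iff_coprime, ← Nat.card_eq_fintype_card]
    exact (Nat.Prime.coprime_iff_not_dvd hp).mpr hndvd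
  have hp1 := eq_one_of_smul_eq_smul_of_isCoprime hu (orbitSum_mem_invariantLattice ρ w) hprim
    (by exact_mod_cast hp.pos) hcop hkey
  exact hp.ne_one (by exact_mod_cast hp1)

/-- Let `L` be a nondegenerate lattice with a finite group `G` acting by
isometries.  If `u ∈ L^G` is primitive in `L^G`, `v ∈ L_G`, and `p` is a prime with
`u + v ∈ p·L`, then `p` divides `|G|`. -/
theorem prime_dvd_card_of_sum_in_p_mul_lattice
    {L : Type*} [AddCommGroup L] [Module ℤ L]
    {G : Type*} [Group G] [Finite G]
    (B : L →ₗ[ℤ] L →ₗ[ℤ] ℤ) (hsymm : ∀ x y : L, B x y = B y x)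
    (ρ : G →* (L ≃ₗ[ℤ] L)) (hisom : ∀ (g : G) (x y : L), B (ρ g x) (ρ g y) = B x y)
    {ι : Type*} [Fintype ι] [DecidableEq ι] (bL : Module.Basis ι ℤ L)
    (hdet : (gramMatrix B (fun i => bL i)).det ≠ 0)
    (p : ℕ) (hp : p.Prime)
    (u : L) (hu : u ∈ invariantLattice ρ) (hu0 : u ≠ 0)
    (hprim : ∀ m : ℤ, 0 < m → ∀ u' ∈ invariantLattice ρ, u = m • u' → m = 1)
    (v : L) (hv : v ∈ coinvariantLattice B ρ)
    (hw : ∃ w : L, u + v = (p : ℤ) • w) :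
    p ∣ Nat.card G :=
  prime_dvd_card_of_sum_in_p_mul_lattice_general B ρ hisom bL hdet p hp u hu hprim v hv hw
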